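/- Let Γ be the subgroup of SL(2,ℝ) generated by the five matrices γ₁ = [[1,1],[0,1]], γ₂ = [[0, −1/√11],[√11, 0]], γ₃ = [[√11, 5/√11],[2√11, √11]], γ₄ = [[10,3],[33,10]], γ₅ = [[23,8],[66,23]]. Then Γ is a discrete subgroup of SL(2,ℝ) (i.e. Γ carries the discrete topology as a subspace of SL(2,ℝ)). -/

import Mathlib

open Matrix
open scoped MatrixGroups

/-- The topology on `SL(2,ℝ)` induced from the space of 2×2 real matrices. -/
def slTopology : TopologicalSpace SL(2, ℝ) :=
  TopologicalSpace.induced (fun g => (g : Matrix (Fin 2) (Fin 2) ℝ)) inferInstance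

/-- A subgroup of `SL(2,ℝ)` is discrete if it carries the discrete topology as a
subspace of `SL(2,ℝ)`. -/
def IsDiscreteSubgroup (Γ : Subgroup SL(2, ℝ)) : Prop :=
  @DiscreteTopology Γ (TopologicalSpace.induced (Subtype.val : Γ → SL(2, ℝ)) slTopology)

/-- `γ₁ = [[1,1],[0,1]]`. -/
def gamma1 : SL(2, ℝ) := ⟨!![1, 1; 0, 1], by norm_num [Matrix.det_fin_two_of]⟩

/-- `γ₂ = [[0, −1/√11],[√11, 0]]`. -/
noncomputable def gamma2 : SL(2, ℝ) :=
  ⟨!![0, -1 / Real.sqrt 11; Real.sqrt 11, 0], by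
    have h : Real.sqrt 11 ≠ 0 := by positivity
    rw [Matrix.det_fin_two_of]
    field_simp
    norm_num⟩

/-- `γ₃ = [[√11, 5/√11],[2√11, √11]]`. -/
noncomputable def gamma3 : SL(2, ℝ) :=
  ⟨!![Real.sqrt 11, 5 / Real.sqrt 11; 2 * Real.sqrt 11, Real.sqrt 11], by
    have h11 : Real.sqrt 11 * Real.sqrt 11 = 11 :=
      Real.mul_self_sqrt (by norm_num)
    have h : Real.sqrt 11 ≠ 0 := by positivity
    rw [Matrix.det_fin_two_of]
    field_simp
    nlinarith [h11]⟩

/-- `γ₄ = [[10,3],[33,10]]`. -/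
def gamma4 : SL(2, ℝ) := ⟨!![10, 3; 33, 10], by norm_num [Matrix.det_fin_two_of]⟩

/-- `γ₅ = [[23,8],[66,23]]`. -/
def gamma5 : SL(2, ℝ) := ⟨!![23, 8; 66, 23], by norm_num [Matrix.det_fin_two_of]⟩
/-!
Γ lies in `Γ₀(11) ∪ W Γ₀(11)`, where `W = γ₂ = [[0, -1/√11], [√11, 0]]` is the Fricke involution
of level 11: `γ₁, γ₄, γ₅ ∈ Γ₀(11)` and `W⁻¹ γ₃ = [[2, 1], [-11, -5]] ∈ Γ₀(11)`. Since `W`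
normalises `Γ₀(11)` and `W² = -1`, this union is a group in which `Γ₀(11)` has index at most 2.
`Γ₀(11) ⊆ SL(2, ℤ)` is discrete in `SL(2, ℝ)`, and discreteness passes to finite-index
overgroups and to subgroups.
-/

namespace Subgroup

section UnionCoset

variable {G : Type*} [Group G] (N : Subgroup G) {w : G} (hconj : ∀ n ∈ N, w⁻¹ * n * w ∈ N)
  (hsq : w * w ∈ N)

def unionCoset : Subgroup G where
  carrier := {g | g ∈ N ∨ w⁻¹ * g ∈ N}
  one_mem' := .inl N.one_mem
  mul_mem' := by
    rintro g h (hg | hg) (hh | hh)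
    · exact .inl (N.mul_mem hg hh)
    · refine .inr ?_
      simpa only [mul_assoc, mul_inv_cancel_left] using N.mul_mem (hconj g hg) hh
    · exact .inr (by simpa only [mul_assoc] using N.mul_mem hg hh)
    · refine .inl ?_
      simpa only [mul_assoc, mul_inv_cancel_left] using
        N.mul_mem hsq (N.mul_mem (hconj _ hg) hh)
  inv_mem' := by
    rintro g (hg | hg)
    · exact .inl (N.inv_mem hg)
    · refine .inr ?_
      convert N.mul_mem (hconj _ (N.inv_mem hg)) (N.inv_mem hsq) using 1
      group

theorem le_unionCoset : N ≤ N.unionCoset hconj hsq := fun _ ↦ .inl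

theorem mem_unionCoset_self : w ∈ N.unionCoset hconj hsq :=
  .inr (by simpa only [inv_mul_cancel] using N.one_mem)

instance isFiniteRelIndex_unionCoset : N.IsFiniteRelIndex (N.unionCoset hconj hsq) := by
  let K := N.unionCoset hconj hsq
  let coset : Bool → K ⧸ N.subgroupOf K :=
    fun b ↦ QuotientGroup.mk (if b then ⟨w, N.mem_unionCoset_self hconj hsq⟩ else 1)
  have : Finite (K ⧸ N.subgroupOf K) := Finite.of_surjective coset <| by
    intro q
    induction q using QuotientGroup.induction_on with | H k => ?_
    rcases k with ⟨k, hk | hk⟩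
    · exact ⟨false, QuotientGroup.eq.2 (by simpa [coset, mem_subgroupOf] using hk)⟩
    · exact ⟨true, QuotientGroup.eq.2 (by simpa [coset, mem_subgroupOf] using hk)⟩
  exact ⟨index_ne_zero_of_finite⟩

theorem discreteTopology_unionCoset [TopologicalSpace G] [IsTopologicalGroup G] [T2Space G]
    [DiscreteTopology N] : DiscreteTopology (N.unionCoset hconj hsq) :=
  (discreteTopology_iff_of_isFiniteRelIndex (N.le_unionCoset hconj hsq)).1 ‹_›

end UnionCoset

end Subgroup

open CongruenceSubgroup

abbrev gamma0Real (N : ℕ) : Subgroup SL(2, ℝ) :=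
  (Gamma0 N).map (Matrix.SpecialLinearGroup.map (Int.castRingHom ℝ))

instance discreteTopology_gamma0Real (N : ℕ) : DiscreteTopology (gamma0Real N) :=
  DiscreteTopology.of_subset Matrix.SpecialLinearGroup.discreteSpecialLinearGroupIntRangeSL
    (Subgroup.map_le_range _ _)

theorem mem_gamma0Real_of_coe_eq {N : ℕ} {g : SL(2, ℝ)} {a b c d : ℤ}
    (hg : (g : Matrix (Fin 2) (Fin 2) ℝ) = !![(a : ℝ), b; N * c, d]) : g ∈ gamma0Real N := by
  have hdet : a * d - b * (N * c) = 1 := by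
    have := g.det_coe
    rw [hg, Matrix.det_fin_two_of] at this
    exact_mod_cast this
  let A : SL(2, ℤ) := ⟨!![a, b; N * c, d], by rw [Matrix.det_fin_two_of]; exact hdet⟩
  refine ⟨A, Gamma0_mem.2 (by simp [A]), ?_⟩
  ext i j
  rw [Matrix.SpecialLinearGroup.map_apply_coe, RingHom.mapMatrix_apply, hg]
  fin_cases i <;> fin_cases j <;> simp [A]

/-- The Fricke involution `W_N = [[0, -1], [N, 0]]`, rescaled by `1/√N` into `SL(2, ℝ)`. -/
noncomputable def fricke (N : ℕ) [NeZero N] : SL(2, ℝ) :=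
  ⟨!![0, -1 / √N; √N, 0], by
    have : √(N : ℝ) ≠ 0 := by simp [NeZero.ne N]
    simp [Matrix.det_fin_two_of, this]⟩

section Fricke

variable (N : ℕ) [NeZero N]

theorem fricke_mul_self_mem : fricke N * fricke N ∈ gamma0Real N := by
  refine ⟨-1, by simp, ?_⟩
  have hs0 : √(N : ℝ) ≠ 0 := by simp [NeZero.ne N]
  ext i j
  simp only [Matrix.SpecialLinearGroup.coe_mul]
  fin_cases i <;> fin_cases j <;> simp [fricke, Matrix.mul_apply, Fin.sum_univ_two, hs0]
  field_simp

theorem fricke_inv_mul_mul_mem :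
    ∀ g ∈ gamma0Real N, (fricke N)⁻¹ * g * fricke N ∈ gamma0Real N := by
  rintro _ ⟨A, hA, rfl⟩
  obtain ⟨c, hc⟩ := (ZMod.intCast_zmod_eq_zero_iff_dvd _ _).1 (Gamma0_mem.1 hA)
  -- `W⁻¹ [[a, b], [N c, d]] W = [[d, -c], [-N b, a]]`
  let A' : SL(2, ℤ) := ⟨!![A 1 1, -c; -N * A 0 1, A 0 0], by
    have := A.det_coe
    rw [Matrix.det_fin_two] at this
    rw [Matrix.det_fin_two_of]
    linear_combination this + A 0 1 * hc⟩
  refine ⟨A', Gamma0_mem.2 (by simp [A']), ?_⟩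
  rw [mul_assoc, eq_inv_mul_iff_mul_eq]
  have hs : √(N : ℝ) ^ 2 = N := Real.sq_sqrt (Nat.cast_nonneg N)
  have hs0 : √(N : ℝ) ≠ 0 := by simp [NeZero.ne N]
  ext i j
  simp only [Matrix.SpecialLinearGroup.coe_mul, Matrix.SpecialLinearGroup.map_apply_coe,
    RingHom.mapMatrix_apply]
  fin_cases i <;> fin_cases j <;> simp [fricke, A', Matrix.mul_apply, Fin.sum_univ_two, hc] <;>
    field_simp <;> simp [hs, mul_comm]

end Fricke

theorem gamma1_mem_gamma0Real : gamma1 ∈ gamma0Real 11 :=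
  mem_gamma0Real_of_coe_eq (a := 1) (b := 1) (c := 0) (d := 1) (by simp [gamma1])

theorem gamma4_mem_gamma0Real : gamma4 ∈ gamma0Real 11 :=
  mem_gamma0Real_of_coe_eq (a := 10) (b := 3) (c := 3) (d := 10) (by norm_num [gamma4])

theorem gamma5_mem_gamma0Real : gamma5 ∈ gamma0Real 11 :=
  mem_gamma0Real_of_coe_eq (a := 23) (b := 8) (c := 6) (d := 23) (by norm_num [gamma5])

theorem gamma2_eq_fricke : gamma2 = fricke 11 := by
  ext i j
  fin_cases i <;> fin_cases j <;> simp [gamma2, fricke]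

theorem fricke_inv_mul_gamma3_mem_gamma0Real : (fricke 11)⁻¹ * gamma3 ∈ gamma0Real 11 := by
  refine mem_gamma0Real_of_coe_eq (a := 2) (b := 1) (c := -1) (d := -5) ?_
  have hs0 : √(11 : ℝ) ≠ 0 := by positivity
  ext i j
  simp only [Matrix.SpecialLinearGroup.coe_mul, Matrix.SpecialLinearGroup.coe_inv,
    Matrix.adjugate_fin_two]
  fin_cases i <;> fin_cases j <;>
    simp [fricke, gamma3, Matrix.mul_apply, Fin.sum_univ_two] <;> field_simp

/-- The subgroup of `SL(2,ℝ)` generated by `γ₁, γ₂, γ₃, γ₄, γ₅` is discrete. -/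
theorem generated_subgroup_discrete :
    IsDiscreteSubgroup
      (Subgroup.closure {gamma1, gamma2, gamma3, gamma4, gamma5}) := by
  let H := (gamma0Real 11).unionCoset (fricke_inv_mul_mul_mem 11) (fricke_mul_self_mem 11)
  have hle : Subgroup.closure {gamma1, gamma2, gamma3, gamma4, gamma5} ≤ H := by
    rw [Subgroup.closure_le]
    rintro g (rfl | rfl | rfl | rfl | rfl)
    · exact .inl gamma1_mem_gamma0Real
    · exact gamma2_eq_fricke ▸ Subgroup.mem_unionCoset_self _ _ _
    · exact .inr fricke_inv_mul_gamma3_mem_gamma0Real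
    · exact .inl gamma4_mem_gamma0Real
    · exact .inl gamma5_mem_gamma0Real
  have : DiscreteTopology H := Subgroup.discreteTopology_unionCoset _ _ _
  exact DiscreteTopology.of_subset this hle
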